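/- arXiv:math/0004085 — 2 statements merged into one kernel-verified Lean document; each statement's English description precedes it below -/
import Mathlib

section
/- Fix a real parameter a with a < 1 and a ≠ 0, and set E(n) = (1-a)^(-n/2) for real n. The function C_4 defined in the context tends, as real n tends to 2 with n ≠ 2, to the limit ((17a - 67)·ln(1-a))/(12a) + (137a - 134)/(24·(1-a)). (This is the paper's dimension n = 2 value of the coefficient C_4 in the heat invariant E_2 of the nonminimal operator on a 2-dimensional manifold with torsion.) -/
/-!
The numerator `N(n)` of `C_4(n)` vanishes at `n = 2`, because `E(2) = (1 - a)⁻¹`. Splitting the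
denominator as `(n - 2) · 6an(n + 2)`, the limit is therefore `N'(2) / 48a`, and the logarithm
enters through `E'(n) = -E(n) ln(1 - a) / 2`.
-/

open Filter Topology

theorem tendsto_div_sub_mul_of_hasDerivAt {f g : ℝ → ℝ} {f' x₀ : ℝ} (hf₀ : f x₀ = 0)
    (hf : HasDerivAt f f' x₀) (hg : ContinuousAt g x₀) (hg₀ : g x₀ ≠ 0) :
    Tendsto (fun x => f x / ((x - x₀) * g x)) (𝓝[≠] x₀) (𝓝 (f' / g x₀)) := by
  have hslope := hasDerivAt_iff_tendsto_slope.mp hf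
  refine (hslope.div (hg.tendsto.mono_left nhdsWithin_le_nhds) hg₀).congr fun x => ?_
  rw [Pi.div_apply, slope_def_field, hf₀, sub_zero, div_div]

theorem hasDerivAt_rpow_neg_half {b : ℝ} (hb : 0 < b) (x : ℝ) :
    HasDerivAt (fun n : ℝ => b ^ (-(n / 2))) (-(b ^ (-(x / 2)) * Real.log b) / 2) x := by
  have hexp : HasDerivAt (fun n : ℝ => -(n / 2)) (-(1 / 2)) x :=
    ((hasDerivAt_id x).div_const 2).neg
  exact ((Real.hasStrictDerivAt_const_rpow hb (-(x / 2))).hasDerivAt.comp x hexp).congr_deriv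
    (by ring)

theorem hasDerivAt_quadratic (c₂ c₁ c₀ x : ℝ) :
    HasDerivAt (fun n : ℝ => c₂ * n ^ 2 + c₁ * n + c₀) (2 * c₂ * x + c₁) x := by
  refine ((((hasDerivAt_pow 2 x).const_mul c₂).add
    ((hasDerivAt_id x).const_mul c₁)).add_const c₀).congr_deriv (by ring)

noncomputable def c4Numerator (a n : ℝ) : ℝ :=
  (1 - a) ^ (-(n / 2)) * ((17*a^2 - 17*a) * n^2 + (34*a^2 - 168*a + 140) * n + (256 - 268*a)) -
    (53*a * n^2 + (140 - 40*a) * n + (256 - 268*a))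

section

variable {a : ℝ}

-- At `n = 2` the two quadratics equal `8 (17a - 67)(a - 1)` and `-8 (17a - 67)`.
theorem c4Numerator_two (ha : 1 - a ≠ 0) : c4Numerator a 2 = 0 := by
  rw [c4Numerator, show -((2 : ℝ) / 2) = -1 by norm_num, Real.rpow_neg_one]
  field_simp
  ring

theorem hasDerivAt_c4Numerator_two (ha : 0 < 1 - a) :
    HasDerivAt (c4Numerator a)
      (4 * (17*a - 67) * Real.log (1 - a) + 2 * a * (137*a - 134) / (1 - a)) 2 := by
  refine (((hasDerivAt_rpow_neg_half ha 2).mul (hasDerivAt_quadratic _ _ _ 2)).sub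
    (hasDerivAt_quadratic _ _ _ 2)).congr_deriv ?_
  rw [show -((2 : ℝ) / 2) = -1 by norm_num, Real.rpow_neg_one]
  field_simp
  ring

end

theorem stmt_7 (a : ℝ) (ha1 : a < 1) (ha0 : a ≠ 0) :
    Filter.Tendsto
      (fun n : ℝ =>
        ((1 - a) ^ (-(n / 2)) * (17*a^2*n^2 + 34*a^2*n - 17*a*n^2 - 168*a*n - 268*a + 140*n + 256) - 53*a*n^2 + 40*a*n + 268*a - 140*n - 256) / (6*a*(n-2)*n*(n+2)))
      (nhdsWithin (2 : ℝ) {(2 : ℝ)}ᶜ)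
      (nhds (((17*a - 67) * Real.log (1 - a)) / (12*a) + (137*a - 134) / (24*(1-a)))) := by
  have ha : 0 < 1 - a := by linarith
  have hg₀ : 6 * a * 2 * (2 + 2) ≠ 0 := by simpa using ha0
  have key := tendsto_div_sub_mul_of_hasDerivAt (c4Numerator_two ha.ne')
    (hasDerivAt_c4Numerator_two ha) (g := fun n => 6 * a * n * (n + 2)) (by fun_prop) hg₀
  convert key using 2 with n
  · rw [c4Numerator]; ring
  · field_simp; ring
end

section
/- Fix a real parameter a with a < 1 and a ≠ 0, and set E(n) = (1-a)^(-n/2) for real n. The function D_5 defined in the context tends, as real n tends to 2 with n ≠ 2, to the limit -((a - 4)·ln(1-a))/(2a) - (11a - 14)/(6·(1-a)). (This is the paper's dimension n = 2 value of the coefficient C_5 of the term D_α T^α in the Lorentz trace tr_L E_2 of the heat invariant E_2 of the nonminimal operator on a 2-dimensional manifold with torsion.) -/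
/-!
At `n = 2` the numerator of `D₅` vanishes, because `(1 - a)⁻¹` times the quadratic factor
`12 (1 - a) (4 - a)` equals `48 - 12 a`. The denominator is `(n - 2) · 6 a n`, so the limit is the
derivative of the numerator at `2` divided by `12 a`: a removable singularity.
-/

open Filter Topology Real

theorem HasDerivAt.tendsto_div_sub_mul {f g : ℝ → ℝ} {f' x : ℝ}
    (hf : HasDerivAt f f' x) (hfx : f x = 0) (hg : ContinuousAt g x) (hgx : g x ≠ 0) :
    Tendsto (fun y => f y / ((y - x) * g y)) (𝓝[≠] x) (𝓝 (f' / g x)) := by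
  have hginv := (hg.inv₀ hgx).tendsto.mono_left (nhdsWithin_le_nhds (s := {x}ᶜ))
  refine ((hasDerivAt_iff_tendsto_slope.mp hf).mul hginv).congr fun y => ?_
  simp only [slope_def_field, hfx, sub_zero, Pi.inv_apply, div_eq_mul_inv, mul_inv, mul_assoc]

theorem Real.rpow_neg_two_div_two (c : ℝ) : c ^ (-(2 / 2 : ℝ)) = c⁻¹ := by
  norm_num [Real.rpow_neg_one]

noncomputable def d5Numerator (a n : ℝ) : ℝ :=
  -((1 - a) ^ (-(n / 2))) * (a^2*n^2 + 4*a^2*n - a*n^2 - 10*a*n - 36*a + 48)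
    + a*n^3 - 3*a*n^2 + 14*a*n - 36*a + 48

theorem hasDerivAt_d5Numerator {a : ℝ} (ha : a < 1) (x : ℝ) :
    HasDerivAt (d5Numerator a)
      ((1 - a) ^ (-(x / 2)) * (log (1 - a) / 2 * (a^2*x^2 + 4*a^2*x - a*x^2 - 10*a*x - 36*a + 48)
        - (2*a^2*x + 4*a^2 - 2*a*x - 10*a)) + (3*a*x^2 - 6*a*x + 14*a)) x := by
  have hE : HasDerivAt (fun n : ℝ => (1 - a) ^ (-(n / 2)))
      (log (1 - a) * -(1 / 2) * (1 - a) ^ (-(x / 2))) x :=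
    ((hasDerivAt_id' x).div_const 2).neg.const_rpow (sub_pos.2 ha)
  have hsq : HasDerivAt (fun n : ℝ => n ^ 2) (2 * x) x := by simpa using hasDerivAt_pow 2 x
  have hcube : HasDerivAt (fun n : ℝ => n ^ 3) (3 * x ^ 2) x := by simpa using hasDerivAt_pow 3 x
  have hid := hasDerivAt_id' x
  have hP : HasDerivAt (fun n : ℝ => a^2*n^2 + 4*a^2*n - a*n^2 - 10*a*n - 36*a + 48)
      (2*a^2*x + 4*a^2 - 2*a*x - 10*a) x :=
    (((((hsq.const_mul (a^2)).add (hid.const_mul (4*a^2))).sub (hsq.const_mul a)).sub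
      (hid.const_mul (10*a))).sub_const (36*a) |>.add_const 48).congr_deriv (by ring)
  have hQ : HasDerivAt (fun n : ℝ => a*n^3 - 3*a*n^2 + 14*a*n - 36*a + 48)
      (3*a*x^2 - 6*a*x + 14*a) x :=
    ((((hcube.const_mul a).sub (hsq.const_mul (3*a))).add (hid.const_mul (14*a))).sub_const (36*a)
      |>.add_const 48).congr_deriv (by ring)
  have hsplit : d5Numerator a = fun n => -((1 - a) ^ (-(n / 2))) *
      (a^2*n^2 + 4*a^2*n - a*n^2 - 10*a*n - 36*a + 48) + (a*n^3 - 3*a*n^2 + 14*a*n - 36*a + 48) := by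
    funext n; rw [d5Numerator]; ring
  rw [hsplit]
  exact ((hE.neg.mul hP).add hQ).congr_deriv (by simp only [Pi.neg_apply]; ring)

theorem d5Numerator_two {a : ℝ} (ha : a < 1) : d5Numerator a 2 = 0 := by
  rw [d5Numerator, rpow_neg_two_div_two]
  field_simp [(sub_pos.2 ha).ne']
  ring

theorem stmt_19 (a : ℝ) (ha1 : a < 1) (ha0 : a ≠ 0) :
    Filter.Tendsto
      (fun n : ℝ =>
        (-((1 - a) ^ (-(n / 2))) * (a^2*n^2 + 4*a^2*n - a*n^2 - 10*a*n - 36*a + 48) + a*n^3 - 3*a*n^2 + 14*a*n - 36*a + 48) / (6*a*(n-2)*n))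
      (nhdsWithin (2 : ℝ) {(2 : ℝ)}ᶜ)
      (nhds (-((a - 4) * Real.log (1 - a)) / (2*a) - (11*a - 14) / (6*(1-a)))) := by
  have hlim := (hasDerivAt_d5Numerator ha1 2).tendsto_div_sub_mul (d5Numerator_two ha1)
    (g := fun n => 6 * a * n) (by fun_prop) (by positivity)
  convert hlim using 2 with n
  · simp only [d5Numerator]; ring
  · rw [rpow_neg_two_div_two]; field_simp [(sub_pos.2 ha1).ne']; ring
end
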